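/- Let 0 < λ_l < λ_u be reals, n ≥ 1 an integer, d = (λ_l + λ_u)/(λ_u − λ_l), and for m = 1, …, n set r_m = (λ_l + λ_u − (λ_u − λ_l)·cos((2m − 1)π/(2n)))/2 and c_m = 1/r_m. Then for every λ ∈ [λ_l, λ_u], ∏_{m=1}^{n} (1 − c_m λ)² ≤ 1/T_n(d)², and equality holds at λ = λ_l; hence the supremum over λ ∈ [λ_l, λ_u] of ∏_{m=1}^{n} (1 − c_m λ)² equals exactly 1/T_n(d)². -/

import Mathlib

open Real Polynomial Finset

/-! With `t(λ) = (λ_l + λ_u - 2λ)/(λ_u - λ_l)`, the affine map sending `[λ_l, λ_u]` onto `[-1, 1]`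
and `0` to `d`, the step sizes `c_m` are the reciprocals of the preimages of the roots
`cos((2m - 1)π/(2n))` of `T_n`. Factoring `T_n` over its roots gives
`∏ (1 - c_m λ) = T_n(t(λ)) / T_n(d)`. Since `|T_n| ≤ 1` on `[-1, 1]`, `T_n(1) = 1` and
`T_n(d) ≥ 1`, the square of this is at most `1/T_n(d)²`, with equality at `λ = λ_l`. -/

namespace Polynomial.Chebyshev

theorem roots_T_real_eq_map (n : ℕ) :
    (T ℝ n).roots = (Multiset.range n).map fun k : ℕ ↦ cos ((2 * k + 1) * π / (2 * n)) := by
  rw [roots_T_real, image_val, range_val, (roots_T_real_nodup n).dedup]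

theorem eval_T_real_eq_prod (n : ℕ) (x : ℝ) :
    (T ℝ n).eval x = 2 ^ (n - 1) * ∏ m ∈ Icc 1 n, (x - cos ((2 * m - 1) * π / (2 * n))) := by
  have hsplit : (T ℝ n).roots.card = (T ℝ n).natDegree := by simp [roots_T_real_eq_map]
  conv_lhs => rw [← C_leadingCoeff_mul_prod_multiset_X_sub_C hsplit]
  rw [eval_mul, eval_C, leadingCoeff_T, Int.natAbs_natCast, eval_multiset_prod,
    roots_T_real_eq_map, Multiset.map_map, Multiset.map_map, ← Ico_add_one_right_eq_Icc,
    prod_Ico_eq_prod_range, Nat.add_sub_cancel, prod_eq_multiset_prod, range_val]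
  congr! 3 with k
  simp only [Function.comp_apply, eval_sub, eval_X, eval_C, Nat.cast_add, Nat.cast_one]
  ring_nf

theorem eval_T_real_div_eval_T_real (n : ℕ) (t d : ℝ) :
    (T ℝ n).eval t / (T ℝ n).eval d =
      ∏ m ∈ Icc 1 n,
        (t - cos ((2 * m - 1) * π / (2 * n))) / (d - cos ((2 * m - 1) * π / (2 * n))) := by
  rw [eval_T_real_eq_prod, eval_T_real_eq_prod, mul_div_mul_left _ _ (by positivity),
    prod_div_distrib]

end Polynomial.Chebyshev

open Polynomial.Chebyshev

theorem one_sub_inv_mul_eq_div {a b x lam : ℝ} (hab : a ≠ b) (hx : a + b - (b - a) * x ≠ 0) :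
    1 - 1 / ((a + b - (b - a) * x) / 2) * lam =
      ((a + b - 2 * lam) / (b - a) - x) / ((a + b) / (b - a) - x) := by
  have hba : b - a ≠ 0 := sub_ne_zero.mpr hab.symm
  field_simp
  ring

noncomputable def chebyshevContraction (a b : ℝ) (n : ℕ) (lam : ℝ) : ℝ :=
  ∏ m ∈ Icc 1 n, (1 - 1 / ((a + b - (b - a) * cos ((2 * m - 1) * π / (2 * n))) / 2) * lam) ^ 2

variable {a b : ℝ}

theorem chebyshevContraction_eq (ha : 0 < a) (hab : a < b) (n : ℕ) (lam : ℝ) :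
    chebyshevContraction a b n lam =
      ((T ℝ n).eval ((a + b - 2 * lam) / (b - a)) / (T ℝ n).eval ((a + b) / (b - a))) ^ 2 := by
  rw [eval_T_real_div_eval_T_real, ← prod_pow, chebyshevContraction]
  refine prod_congr rfl fun m _ ↦ ?_
  have hpos : 0 < a + b - (b - a) * cos ((2 * m - 1) * π / (2 * n)) := by
    nlinarith [cos_le_one ((2 * m - 1) * π / (2 * n))]
  rw [one_sub_inv_mul_eq_div hab.ne hpos.ne']

theorem chebyshevContraction_le (ha : 0 < a) (hab : a < b) (n : ℕ) (lam : ℝ)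
    (hlam : lam ∈ Set.Icc a b) :
    chebyshevContraction a b n lam ≤ 1 / (T ℝ n).eval ((a + b) / (b - a)) ^ 2 := by
  have hT : 1 ≤ (T ℝ n).eval ((a + b) / (b - a)) :=
    one_le_eval_T_real n <| (one_le_div (sub_pos.mpr hab)).mpr (by linarith)
  have ht : |(a + b - 2 * lam) / (b - a)| ≤ 1 := by
    rw [abs_div, abs_of_pos (sub_pos.mpr hab), div_le_one (sub_pos.mpr hab), abs_le]
    constructor <;> linarith [hlam.1, hlam.2]
  rw [chebyshevContraction_eq ha hab, div_pow]
  gcongr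
  exact (sq_le_one_iff_abs_le_one _).mpr (abs_eval_T_real_le_one n ht)

theorem chebyshevContraction_left (ha : 0 < a) (hab : a < b) (n : ℕ) :
    chebyshevContraction a b n a = 1 / (T ℝ n).eval ((a + b) / (b - a)) ^ 2 := by
  rw [chebyshevContraction_eq ha hab, div_pow, show (a + b - 2 * a) / (b - a) = 1 by
    field_simp [(sub_pos.mpr hab).ne']; ring, T_eval_one, one_pow]

theorem contraction_sup_achieved_by_chebyshev_nodes
    (lamL lamU : ℝ) (h0 : 0 < lamL) (h1 : lamL < lamU) (n : ℕ) :
    (∀ lam ∈ Set.Icc lamL lamU,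
      ∏ m ∈ Finset.Icc 1 n,
          (1 - (1 / ((lamL + lamU - (lamU - lamL) *
              Real.cos ((2 * (m : ℝ) - 1) * Real.pi / (2 * (n : ℝ)))) / 2)) * lam) ^ 2 ≤
        1 / ((Polynomial.Chebyshev.T ℝ (n : ℤ)).eval ((lamL + lamU) / (lamU - lamL))) ^ 2) ∧
    (∏ m ∈ Finset.Icc 1 n,
        (1 - (1 / ((lamL + lamU - (lamU - lamL) *
            Real.cos ((2 * (m : ℝ) - 1) * Real.pi / (2 * (n : ℝ)))) / 2)) * lamL) ^ 2 =
      1 / ((Polynomial.Chebyshev.T ℝ (n : ℤ)).eval ((lamL + lamU) / (lamU - lamL))) ^ 2) ∧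
    sSup ((fun lam : ℝ =>
        ∏ m ∈ Finset.Icc 1 n,
          (1 - (1 / ((lamL + lamU - (lamU - lamL) *
              Real.cos ((2 * (m : ℝ) - 1) * Real.pi / (2 * (n : ℝ)))) / 2)) * lam) ^ 2) ''
        Set.Icc lamL lamU) =
      1 / ((Polynomial.Chebyshev.T ℝ (n : ℤ)).eval ((lamL + lamU) / (lamU - lamL))) ^ 2 := by
  change (∀ lam ∈ Set.Icc lamL lamU, chebyshevContraction lamL lamU n lam ≤ _) ∧
    chebyshevContraction lamL lamU n lamL = _ ∧
    sSup (chebyshevContraction lamL lamU n '' Set.Icc lamL lamU) = _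
  have hle := chebyshevContraction_le h0 h1 n
  have hleft := chebyshevContraction_left h0 h1 n
  refine ⟨hle, hleft, IsGreatest.csSup_eq ⟨⟨lamL, Set.left_mem_Icc.mpr h1.le, hleft⟩, ?_⟩⟩
  rintro _ ⟨lam, hlam, rfl⟩
  exact hle lam hlam
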